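/- Fix H* ∈ (1/2, 1). There exists a constant C > 0, depending only on H*, such that for all h > 0, t > 0, x ∈ ℝ and every sign σ ∈ {+1, -1}, setting F(y) = (2√h)^{-1} G(⌊t⌋_h, 2(⌊x⌋_{2√h} − ⌊y⌋_{2√h}) + σ·τ(⌊t⌋_h)) for y ∈ ℝ, one has H*(2H*-1) ∫_ℝ ∫_ℝ |y - z|^{2H*-2} F(y) F(z) dy dz ≤ C t^{H*-1}. -/

import Mathlib

/-!
The density `F` has total mass at most `1` and is uniformly small: a walk of `m` steps hits a
given point with probability at most `binom(m, ⌊m/2⌋) / 2^m ≤ (m + 1)^(-1/2)`, and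
`m + 1 > t / h`, so `F ≤ t^(-1/2)`. Split the inner integral `∫ |y - z|^(2H*-2) F(z) dz` at
`|y - z| = √t`: near `y` bound `F` by `t^(-1/2)` and integrate the kernel, far from `y` bound
the kernel by `t^(H*-1)` and use the mass of `F`. Both parts are `O(t^(H*-1))`, uniformly in `y`,
and integrating against `F(y) dy` keeps this bound.
-/

open MeasureTheory

noncomputable section

/-- `G m n = P(S_m = n)`, the probability mass function of the simple random walk
`S_m = Z_1 + … + Z_m` with i.i.d. steps `Z_i` uniform on `{-1, 1}`. -/
def rwG (m : ℕ) (n : ℤ) : ℝ :=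
  ((Finset.univ.filter fun f : Fin m → Bool =>
      (∑ i, if f i then (1 : ℤ) else -1) = n).card : ℝ) / 2 ^ m

/-- The alternating indicator `τ : ℤ → {0,1}`: `τ(n) = 0` for even `n`, `1` for odd `n`. -/
def altTau (n : ℤ) : ℤ := if Even n then 0 else 1

/-- The rescaled random-walk density
`F(y) = (2√h)⁻¹ G(⌊t⌋_h, 2(⌊x⌋_{2√h} − ⌊y⌋_{2√h}) + σ τ(⌊t⌋_h))`. -/
def rwDensity (h t x : ℝ) (σ : ℤ) (y : ℝ) : ℝ :=
  1 / (2 * Real.sqrt h) *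
    rwG (⌊t / h⌋).toNat
      (2 * (⌊x / (2 * Real.sqrt h)⌋ - ⌊y / (2 * Real.sqrt h)⌋) + σ * altTau ⌊t / h⌋)

namespace Nat

theorem centralBinom_sq_mul_le (n : ℕ) : centralBinom n ^ 2 * (2 * n + 1) ≤ 16 ^ n := by
  induction n with
  | zero => simp
  | succ n ih =>
    refine Nat.le_of_mul_le_mul_left ?_ (by positivity : 0 < (n + 1) ^ 2)
    calc (n + 1) ^ 2 * (centralBinom (n + 1) ^ 2 * (2 * (n + 1) + 1))
        = ((n + 1) * centralBinom (n + 1)) ^ 2 * (2 * n + 3) := by ring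
      _ = (4 * (2 * n + 3) * (2 * n + 1)) * (centralBinom n ^ 2 * (2 * n + 1)) := by
          rw [succ_mul_centralBinom_succ]; ring
      _ ≤ ((n + 1) ^ 2 * 16) * 16 ^ n := Nat.mul_le_mul (by nlinarith) ih
      _ = (n + 1) ^ 2 * 16 ^ (n + 1) := by ring

theorem choose_half_sq_mul_le (m : ℕ) : m.choose (m / 2) ^ 2 * (m + 1) ≤ 4 ^ m := by
  obtain ⟨n, rfl | rfl⟩ := m.even_or_odd'
  · rw [Nat.mul_div_cancel_left n two_pos, ← centralBinom_eq_two_mul_choose, pow_mul]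
    exact centralBinom_sq_mul_le n
  · have hcentral : centralBinom (n + 1) = 2 * (2 * n + 1).choose n := by
      rw [centralBinom_eq_two_mul_choose, show 2 * (n + 1) = 2 * n + 1 + 1 by ring,
        choose_succ_succ', choose_symm_half]
      ring
    have h := centralBinom_sq_mul_le (n + 1)
    have h16 : 16 ^ (n + 1) = 4 * 4 ^ (2 * n + 1) := by
      rw [pow_succ, pow_succ, pow_mul]; norm_num; ring
    rw [hcentral, h16] at h
    rw [show (2 * n + 1) / 2 = n by omega]
    nlinarith

end Nat

open Finset

def walkEnd {m : ℕ} (f : Fin m → Bool) : ℤ := ∑ i, if f i then (1 : ℤ) else -1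

lemma rwG_eq_card (m : ℕ) (n : ℤ) :
    rwG m n = (#{f : Fin m → Bool | walkEnd f = n} : ℝ) / 2 ^ m := rfl

lemma walkEnd_eq {m : ℕ} (f : Fin m → Bool) : walkEnd f = 2 * #{i | f i} - m := by
  have hstep : ∀ i, (if f i then (1 : ℤ) else -1) = 2 * (if f i then 1 else 0) - 1 := by
    intro i; split_ifs <;> norm_num
  simp only [walkEnd, hstep, sum_sub_distrib, ← mul_sum, sum_boole, sum_const, card_univ,
    Fintype.card_fin, nsmul_eq_mul, mul_one]

lemma card_walkEnd_eq_le (m : ℕ) (n : ℤ) :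
    #{f : Fin m → Bool | walkEnd f = n} ≤ m.choose (m / 2) := by
  calc #{f : Fin m → Bool | walkEnd f = n}
      ≤ #(powersetCard ((n + m) / 2).toNat (univ : Finset (Fin m))) := by
        refine card_le_card_of_injOn (fun f => ({i | f i} : Finset (Fin m)))
          (fun f hf => ?_) ?_
        · rw [mem_coe, mem_filter, walkEnd_eq] at hf
          rw [mem_coe, mem_powersetCard]
          exact ⟨subset_univ _, by dsimp only; omega⟩
        · intro f _ g _ hfg
          funext i
          simpa using congrArg (i ∈ ·) hfg
    _ = m.choose ((n + m) / 2).toNat := by simp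
    _ ≤ m.choose (m / 2) := Nat.choose_le_middle _ _

lemma rwG_nonneg (m : ℕ) (n : ℤ) : 0 ≤ rwG m n := by
  rw [rwG_eq_card]; positivity

lemma rwG_sq_mul_le (m : ℕ) (n : ℤ) : rwG m n ^ 2 * (m + 1) ≤ 1 := by
  have hcard : (#{f : Fin m → Bool | walkEnd f = n} : ℝ) ^ 2 * (m + 1) ≤ 4 ^ m := by
    exact_mod_cast (Nat.mul_le_mul_right (m + 1)
      (Nat.pow_le_pow_left (card_walkEnd_eq_le m n) 2)).trans (Nat.choose_half_sq_mul_le m)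
  rw [rwG_eq_card, div_pow, ← pow_mul, mul_comm m 2, pow_mul, div_mul_eq_mul_div,
    div_le_one (by positivity)]
  norm_num [hcard]

lemma sum_rwG_le (m : ℕ) (s : Finset ℤ) : ∑ n ∈ s, rwG m n ≤ 1 := by
  classical
  have hcard : ∑ n ∈ s, #{f : Fin m → Bool | walkEnd f = n} ≤ 2 ^ m := by
    rw [sum_card_fiberwise_eq_card_filter]
    exact (card_le_univ _).trans (by simp)
  simp only [rwG_eq_card, ← sum_div]
  rw [div_le_one (by positivity)]
  exact_mod_cast hcard

lemma tsum_ofReal_rwG_le (m : ℕ) : ∑' n : ℤ, ENNReal.ofReal (rwG m n) ≤ 1 := by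
  refine ENNReal.summable.tsum_le_of_sum_le fun s => ?_
  rw [← ENNReal.ofReal_sum_of_nonneg fun n _ => rwG_nonneg m n, ← ENNReal.ofReal_one]
  exact ENNReal.ofReal_le_ofReal (sum_rwG_le m s)

lemma setOf_floor_div_eq {L : ℝ} (hL : 0 < L) (k : ℤ) :
    {y : ℝ | ⌊y / L⌋ = k} = Set.Ico (k * L) ((k + 1) * L) := by
  ext y
  simp [Int.floor_eq_iff, le_div_iff₀ hL, div_lt_iff₀ hL]

lemma lintegral_comp_floor_div {L : ℝ} (hL : 0 < L) (g : ℤ → ENNReal) :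
    ∫⁻ y, g ⌊y / L⌋ = ∑' k, g k * ENNReal.ofReal L := by
  have hmeas : ∀ k : ℤ, MeasurableSet {y : ℝ | ⌊y / L⌋ = k} := fun k =>
    (measurable_id.div_const L).floor (measurableSet_singleton k)
  have hdisj : Pairwise (Function.onFun Disjoint fun k : ℤ => {y : ℝ | ⌊y / L⌋ = k}) :=
    fun k j hkj => Set.disjoint_left.2 fun y hk hj => hkj (hk.symm.trans hj)
  have hcover : ⋃ k : ℤ, {y : ℝ | ⌊y / L⌋ = k} = Set.univ :=
    Set.iUnion_eq_univ_iff.2 fun y => ⟨_, rfl⟩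
  rw [← setLIntegral_univ, ← hcover, lintegral_iUnion hmeas hdisj]
  refine tsum_congr fun k => ?_
  rw [setLIntegral_congr_fun (hmeas k) fun y (hy : _ = k) => by rw [hy], setLIntegral_const,
    setOf_floor_div_eq hL, Real.volume_Ico]
  ring_nf

lemma rwDensity_nonneg (h t x : ℝ) (σ : ℤ) (y : ℝ) : 0 ≤ rwDensity h t x σ y :=
  mul_nonneg (by positivity) (rwG_nonneg _ _)

lemma lintegral_rwDensity_le {h : ℝ} (hh : 0 < h) (t x : ℝ) (σ : ℤ) :
    ∫⁻ y, ENNReal.ofReal (rwDensity h t x σ y) ≤ 1 := by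
  set L := 2 * Real.sqrt h
  have hL : 0 < L := by positivity
  set m := (⌊t / h⌋).toNat
  set e : ℤ → ℤ := fun k => 2 * (⌊x / L⌋ - k) + σ * altTau ⌊t / h⌋
  have he : Function.Injective e := fun a b hab => by simp only [e] at hab; omega
  calc ∫⁻ y, ENNReal.ofReal (rwDensity h t x σ y)
      = ∑' k, ENNReal.ofReal (1 / L * rwG m (e k)) * ENNReal.ofReal L :=
        lintegral_comp_floor_div hL fun k => ENNReal.ofReal (1 / L * rwG m (e k))
    _ = ∑' k, ENNReal.ofReal (rwG m (e k)) := by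
        refine tsum_congr fun k => ?_
        rw [← ENNReal.ofReal_mul (mul_nonneg (by positivity) (rwG_nonneg _ _))]
        field_simp
    _ ≤ ∑' n, ENNReal.ofReal (rwG m n) :=
        ENNReal.tsum_comp_le_tsum_of_injective he fun n => ENNReal.ofReal (rwG m n)
    _ ≤ 1 := tsum_ofReal_rwG_le m

lemma rwDensity_le_inv_sqrt {h t : ℝ} (hh : 0 < h) (ht : 0 < t) (x : ℝ) (σ : ℤ) (y : ℝ) :
    rwDensity h t x σ y ≤ (Real.sqrt t)⁻¹ := by
  set m := (⌊t / h⌋).toNat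
  set G := rwG m (2 * (⌊x / (2 * Real.sqrt h)⌋ - ⌊y / (2 * Real.sqrt h)⌋) + σ * altTau ⌊t / h⌋)
  have hG : G ^ 2 * (m + 1) ≤ 1 := rwG_sq_mul_le _ _
  have htm : t ≤ h * (m + 1) := by
    have := Nat.lt_floor_add_one (t / h)
    rw [← Int.floor_toNat, div_lt_iff₀ hh] at this
    linarith
  have hsq : rwDensity h t x σ y ^ 2 ≤ t⁻¹ := by
    have hF : rwDensity h t x σ y ^ 2 = G ^ 2 / (4 * h) := by
      rw [rwDensity, mul_pow, div_pow, mul_pow, Real.sq_sqrt hh.le]; ring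
    rw [hF, div_le_iff₀ (by positivity), le_inv_mul_iff₀ ht]
    nlinarith [mul_le_mul_of_nonneg_left htm (sq_nonneg G)]
  rw [← Real.sqrt_inv]
  exact Real.le_sqrt_of_sq_le hsq

lemma lintegral_Ioc_rpow {R α : ℝ} (hR : 0 < R) (hα : -1 < α) :
    ∫⁻ u in Set.Ioc 0 R, ENNReal.ofReal (u ^ α) = ENNReal.ofReal (R ^ (α + 1) / (α + 1)) := by
  have hint : IntegrableOn (fun u : ℝ => u ^ α) (Set.Ioc 0 R) :=
    (intervalIntegrable_iff_integrableOn_Ioc_of_le hR.le).1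
      (intervalIntegral.intervalIntegrable_rpow' hα)
  rw [← ofReal_integral_eq_lintegral_ofReal hint
    ((ae_restrict_iff' measurableSet_Ioc).2
      (ae_of_all _ fun u hu => Real.rpow_nonneg hu.1.le α)),
    ← intervalIntegral.integral_of_le hR.le, integral_rpow (Or.inl hα),
    Real.zero_rpow (by linarith), sub_zero]

lemma lintegral_Icc_abs_rpow {R α : ℝ} (hR : 0 < R) (hα : -1 < α) :
    ∫⁻ u in Set.Icc (-R) R, ENNReal.ofReal (|u| ^ α)
      = 2 * ENNReal.ofReal (R ^ (α + 1) / (α + 1)) := by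
  set φ : ℝ → ENNReal := fun u => ENNReal.ofReal (|u| ^ α)
  have hright : ∫⁻ u in Set.Icc 0 R, φ u = ENNReal.ofReal (R ^ (α + 1) / (α + 1)) := by
    rw [Measure.restrict_congr_set Ioc_ae_eq_Icc.symm, ← lintegral_Ioc_rpow hR hα]
    exact setLIntegral_congr_fun measurableSet_Ioc fun u hu => by
      simp only [φ, abs_of_pos hu.1]
  have hleft : ∫⁻ u in Set.Ico (-R) 0, φ u = ∫⁻ u in Set.Icc 0 R, φ u := by
    rw [← lintegral_indicator measurableSet_Ico, ← lintegral_neg_eq_self,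
      Measure.restrict_congr_set Ioc_ae_eq_Icc.symm, ← lintegral_indicator measurableSet_Ioc]
    congr 1
    funext u
    rw [← Set.indicator_comp_right (fun u : ℝ => -u)]
    simp [φ, Function.comp_def]
  rw [← Set.Ico_union_Icc_eq_Icc (neg_nonpos.2 hR.le) hR.le,
    lintegral_union measurableSet_Icc
      ((Set.Iio_disjoint_Ici le_rfl).mono Set.Ico_subset_Iio_self Set.Icc_subset_Ici_self),
    hleft, hright, two_mul]

lemma lintegral_Icc_abs_sub_rpow (y : ℝ) {R α : ℝ} (hR : 0 < R) (hα : -1 < α) :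
    ∫⁻ z in Set.Icc (y - R) (y + R), ENNReal.ofReal (|y - z| ^ α)
      = 2 * ENNReal.ofReal (R ^ (α + 1) / (α + 1)) := by
  rw [← lintegral_Icc_abs_rpow hR hα, ← lintegral_indicator measurableSet_Icc,
    ← lintegral_indicator measurableSet_Icc,
    ← lintegral_sub_left_eq_self
      ((Set.Icc (-R) R).indicator fun u => ENNReal.ofReal (|u| ^ α)) y]
  congr 1
  funext z
  rw [← Set.indicator_comp_right (y - ·), Set.preimage_const_sub_Icc, sub_neg_eq_add]
  rfl

section RieszPotential

variable {F : ℝ → ℝ} {R α : ℝ}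

lemma lintegral_abs_sub_rpow_mul_le (hR : 0 < R) (hα₁ : -1 < α) (hα₀ : α ≤ 0)
    (hF : ∫⁻ z, ENNReal.ofReal (F z) ≤ 1) (hFR : ∀ z, F z ≤ R⁻¹) (y : ℝ) :
    ∫⁻ z, ENNReal.ofReal (|y - z| ^ α * F z) ≤ ENNReal.ofReal ((2 / (α + 1) + 1) * R ^ α) := by
  have hα : 0 < α + 1 := by linarith
  set A := Set.Icc (y - R) (y + R)
  have hsplit : ∀ z, ENNReal.ofReal (|y - z| ^ α * F z)
      = ENNReal.ofReal (|y - z| ^ α) * ENNReal.ofReal (F z) := fun z =>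
    ENNReal.ofReal_mul (by positivity)
  have hnear : ∫⁻ z in A, ENNReal.ofReal (|y - z| ^ α * F z)
      ≤ ENNReal.ofReal (2 / (α + 1) * R ^ α) := by
    calc ∫⁻ z in A, ENNReal.ofReal (|y - z| ^ α * F z)
        ≤ ∫⁻ z in A, ENNReal.ofReal (|y - z| ^ α) * ENNReal.ofReal R⁻¹ := by
          simp_rw [hsplit]
          gcongr with z
          exact hFR z
      _ = 2 * ENNReal.ofReal (R ^ (α + 1) / (α + 1)) * ENNReal.ofReal R⁻¹ := by
          rw [lintegral_mul_const' _ _ ENNReal.ofReal_ne_top,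
            lintegral_Icc_abs_sub_rpow y hR hα₁]
      _ = ENNReal.ofReal (2 / (α + 1) * R ^ α) := by
          rw [← ENNReal.ofReal_ofNat 2, ← ENNReal.ofReal_mul zero_le_two,
            ← ENNReal.ofReal_mul (by positivity), Real.rpow_add_one hR.ne']
          congr 1
          field_simp
  have hfar : ∫⁻ z in Aᶜ, ENNReal.ofReal (|y - z| ^ α * F z) ≤ ENNReal.ofReal (R ^ α) := by
    calc ∫⁻ z in Aᶜ, ENNReal.ofReal (|y - z| ^ α * F z)
        ≤ ∫⁻ z in Aᶜ, ENNReal.ofReal (R ^ α) * ENNReal.ofReal (F z) := by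
          refine setLIntegral_mono' measurableSet_Icc.compl fun z hz => ?_
          have hRz : R ≤ |y - z| := by
            simp only [A, Set.mem_compl_iff, Set.mem_Icc, not_and_or, not_le] at hz
            rcases hz with hz | hz
            · rw [abs_of_pos (by linarith)]; linarith
            · rw [abs_of_neg (by linarith)]; linarith
          rw [hsplit]
          gcongr ENNReal.ofReal ?_ * _
          exact Real.rpow_le_rpow_of_nonpos hR hRz hα₀
      _ ≤ ∫⁻ z, ENNReal.ofReal (R ^ α) * ENNReal.ofReal (F z) := setLIntegral_le_lintegral _ _
      _ ≤ ENNReal.ofReal (R ^ α) := by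
          rw [lintegral_const_mul' _ _ ENNReal.ofReal_ne_top]
          exact mul_le_of_le_one_right' hF
  calc ∫⁻ z, ENNReal.ofReal (|y - z| ^ α * F z)
      = (∫⁻ z in A, ENNReal.ofReal (|y - z| ^ α * F z))
        + ∫⁻ z in Aᶜ, ENNReal.ofReal (|y - z| ^ α * F z) :=
        (lintegral_add_compl _ measurableSet_Icc).symm
    _ ≤ ENNReal.ofReal (2 / (α + 1) * R ^ α) + ENNReal.ofReal (R ^ α) := add_le_add hnear hfar
    _ = ENNReal.ofReal ((2 / (α + 1) + 1) * R ^ α) := by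
        rw [← ENNReal.ofReal_add (by positivity) (by positivity)]
        ring_nf

lemma lintegral_lintegral_abs_sub_rpow_mul_le {c : ℝ} (hc : 0 ≤ c) (hR : 0 < R) (hα₁ : -1 < α)
    (hα₀ : α ≤ 0) (hF₀ : ∀ z, 0 ≤ F z) (hF : ∫⁻ z, ENNReal.ofReal (F z) ≤ 1)
    (hFR : ∀ z, F z ≤ R⁻¹) :
    ∫⁻ y, ∫⁻ z, ENNReal.ofReal (c * |y - z| ^ α * F y * F z)
      ≤ ENNReal.ofReal (c * ((2 / (α + 1) + 1) * R ^ α)) := by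
  have hfactor : ∀ y z, ENNReal.ofReal (c * |y - z| ^ α * F y * F z)
      = ENNReal.ofReal c * ENNReal.ofReal (F y) * ENNReal.ofReal (|y - z| ^ α * F z) := by
    intro y z
    rw [← ENNReal.ofReal_mul hc, ← ENNReal.ofReal_mul (mul_nonneg hc (hF₀ y))]
    ring_nf
  calc ∫⁻ y, ∫⁻ z, ENNReal.ofReal (c * |y - z| ^ α * F y * F z)
      = ∫⁻ y, ENNReal.ofReal c * ENNReal.ofReal (F y)
          * ∫⁻ z, ENNReal.ofReal (|y - z| ^ α * F z) := by
        simp_rw [hfactor, lintegral_const_mul' _ _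
          (ENNReal.mul_ne_top ENNReal.ofReal_ne_top ENNReal.ofReal_ne_top)]
    _ ≤ ∫⁻ y, ENNReal.ofReal c * ENNReal.ofReal (F y)
          * ENNReal.ofReal ((2 / (α + 1) + 1) * R ^ α) := by
        gcongr with y
        exact lintegral_abs_sub_rpow_mul_le hR hα₁ hα₀ hF hFR y
    _ ≤ ENNReal.ofReal c * ENNReal.ofReal ((2 / (α + 1) + 1) * R ^ α) := by
        rw [lintegral_mul_const' _ _ ENNReal.ofReal_ne_top,
          lintegral_const_mul' _ _ ENNReal.ofReal_ne_top]
        gcongr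
        exact mul_le_of_le_one_right' hF
    _ = ENNReal.ofReal (c * ((2 / (α + 1) + 1) * R ^ α)) := (ENNReal.ofReal_mul hc).symm

end RieszPotential

/-- **Uniform `ℋ*`-norm bound for the rescaled random-walk density.**
Fix `H* ∈ (1/2, 1)`. There is a constant `C > 0`, depending only on `H*`, such that for all
`h > 0`, `t > 0`, `x ∈ ℝ` and both signs `σ ∈ {+1, -1}`,
`H*(2H*-1) ∫∫ |y-z|^{2H*-2} F(y) F(z) dy dz ≤ C t^{H*-1}`. -/
theorem rw_density_Hs_norm_bound (Hs : ℝ) (hHs1 : 1 / 2 < Hs) (hHs2 : Hs < 1) :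
    ∃ C > 0, ∀ h t x : ℝ, 0 < h → 0 < t → ∀ σ : ℤ, σ = 1 ∨ σ = -1 →
      (∫⁻ y : ℝ, ∫⁻ z : ℝ, ENNReal.ofReal
          (Hs * (2 * Hs - 1) * |y - z| ^ (2 * Hs - 2) *
            rwDensity h t x σ y * rwDensity h t x σ z))
        ≤ ENNReal.ofReal (C * t ^ (Hs - 1)) := by
  refine ⟨3, by norm_num, fun h t x hh ht σ _ => ?_⟩
  have hbound := lintegral_lintegral_abs_sub_rpow_mul_le (c := Hs * (2 * Hs - 1))
    (α := 2 * Hs - 2) (by nlinarith) (Real.sqrt_pos.2 ht) (by linarith) (by linarith)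
    (rwDensity_nonneg h t x σ) (lintegral_rwDensity_le hh t x σ)
    (rwDensity_le_inv_sqrt hh ht x σ)
  refine hbound.trans (ENNReal.ofReal_le_ofReal ?_)
  have hsqrt : Real.sqrt t ^ (2 * Hs - 2) = t ^ (Hs - 1) := by
    rw [Real.sqrt_eq_rpow, ← Real.rpow_mul ht.le]; ring_nf
  -- the constant is `Hs (2 Hs - 1) (2 / (2 Hs - 1) + 1) = 2 Hs + Hs (2 Hs - 1) < 3`
  have hconst : Hs * (2 * Hs - 1) * (2 / (2 * Hs - 2 + 1) + 1) ≤ 3 := by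
    rw [show 2 * Hs - 2 + 1 = 2 * Hs - 1 by ring, mul_add, mul_assoc,
      mul_div_cancel₀ _ (by linarith : (2 * Hs - 1) ≠ 0)]
    nlinarith
  rw [hsqrt, ← mul_assoc]
  exact mul_le_mul_of_nonneg_right hconst (Real.rpow_nonneg ht.le _)
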